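/- Let N ≥ 2, α = 1, and let ν be the measure on ℝ^N with density |z|^{-N-1}. Then for every r > 0 and every unit vector e, the set { z ∈ B : r|z·e| ≤ |z - (z·e)e|² } has infinite ν-measure. In particular assumption (A3) fails for the kernel |z|^{-N-1}. -/

import Mathlib

open MeasureTheory Metric Set Module Function
open scoped ENNReal RealInnerProductSpace

/-!
For `0 < t ≤ 1` the parabolic scaling `P_t z = t² ⟪z, e⟫ e + t (z - ⟪z, e⟫ e)` maps the region
into itself, has determinant `t ^ (N + 1)` and shrinks norms by at least the factor `t`. Since the
kernel `|z| ^ (-N - 1)` is homogeneous of degree `-(N + 1)`, `P_t` does not decrease `ν`. A small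
open piece of the region whose distance to the axis `ℝ e` lies in `(1/2, 1)` has positive measure,
and its images under `P_{2^{-k}}` lie at distance `(2^{-k-1}, 2^{-k})` from the axis, hence are
pairwise disjoint: the region contains infinitely many disjoint sets of one fixed positive measure.
-/

section LinearChangeOfVariables

variable {E : Type*} [NormedAddCommGroup E] [NormedSpace ℝ E] [FiniteDimensional ℝ E]
  [MeasurableSpace E] [BorelSpace E] {L : E →ₗ[ℝ] E} {s : Set E}

theorem LinearMap.measurableSet_image (hL : Injective L) (hs : MeasurableSet s) :
    MeasurableSet (L '' s) :=
  measurable_image_of_fderivWithin hs (fun _ _ => L.toContinuousLinearMap.hasFDerivWithinAt)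
    hL.injOn

theorem LinearMap.setLIntegral_image (μ : Measure E) [μ.IsAddHaarMeasure] (hL : Injective L)
    (hs : MeasurableSet s) (g : E → ℝ≥0∞) :
    ∫⁻ x in L '' s, g x ∂μ = ENNReal.ofReal |LinearMap.det L| * ∫⁻ x in s, g (L x) ∂μ := by
  rw [lintegral_image_eq_lintegral_abs_det_fderiv_mul μ hs (f := L)
    (fun _ _ => L.toContinuousLinearMap.hasFDerivWithinAt) hL.injOn,
    lintegral_const_mul' _ _ ENNReal.ofReal_ne_top]
  rfl

end LinearChangeOfVariables

variable {E : Type*} [NormedAddCommGroup E] [InnerProductSpace ℝ E] {e : E}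

theorem norm_sq_eq_inner_sq_add_norm_sub_inner_smul_sq (he : ‖e‖ = 1) (z : E) :
    ‖z‖ ^ 2 = ⟪z, e⟫ ^ 2 + ‖z - ⟪z, e⟫ • e‖ ^ 2 := by
  rw [norm_sub_sq_real, real_inner_smul_right, norm_smul, he, Real.norm_eq_abs, mul_one, sq_abs]
  ring

/-- For unit `e` this is `z ↦ t² ⟪z, e⟫ e + t (z - ⟪z, e⟫ e)`; the transvection form gives its
determinant. -/
noncomputable def parabolicScaling (e : E) (t : ℝ) : E →ₗ[ℝ] E :=
  t • LinearMap.transvection ((t - 1) • innerₛₗ ℝ e) e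

theorem parabolicScaling_apply (t : ℝ) (z : E) :
    parabolicScaling e t z = t • z + ((t ^ 2 - t) * ⟪z, e⟫) • e := by
  simp only [parabolicScaling, LinearMap.smul_apply, LinearMap.transvection.apply,
    innerₛₗ_apply_apply, smul_eq_mul, smul_add, smul_smul, real_inner_comm e]
  ring_nf

theorem inner_parabolicScaling (he : ‖e‖ = 1) (t : ℝ) (z : E) :
    ⟪parabolicScaling e t z, e⟫ = t ^ 2 * ⟪z, e⟫ := by
  rw [parabolicScaling_apply, inner_add_left, real_inner_smul_left, real_inner_smul_left,
    real_inner_self_eq_norm_sq, he]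
  ring

theorem parabolicScaling_sub_inner_smul (he : ‖e‖ = 1) (t : ℝ) (z : E) :
    parabolicScaling e t z - ⟪parabolicScaling e t z, e⟫ • e = t • (z - ⟪z, e⟫ • e) := by
  rw [inner_parabolicScaling he, parabolicScaling_apply]
  module

theorem det_parabolicScaling [FiniteDimensional ℝ E] (he : ‖e‖ = 1) (t : ℝ) :
    LinearMap.det (parabolicScaling e t) = t ^ (finrank ℝ E + 1) := by
  rw [parabolicScaling, LinearMap.det_smul, LinearMap.transvection.det, LinearMap.smul_apply,
    innerₛₗ_apply_apply, real_inner_self_eq_norm_sq, he]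
  simp only [smul_eq_mul]
  ring

theorem parabolicScaling_injective (he : ‖e‖ = 1) {t : ℝ} (ht : t ≠ 0) :
    Injective (parabolicScaling e t) := by
  intro z w hzw
  have hinner : ⟪z, e⟫ = ⟪w, e⟫ := by
    simpa [inner_parabolicScaling he, ht] using congr_arg (⟪·, e⟫) hzw
  have hperp : z - ⟪z, e⟫ • e = w - ⟪w, e⟫ • e := by
    simpa [parabolicScaling_sub_inner_smul he, ht] using
      congr_arg (fun v => v - ⟪v, e⟫ • e) hzw
  rw [← sub_add_cancel z (⟪z, e⟫ • e), hperp, hinner, sub_add_cancel]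

theorem norm_parabolicScaling_le (he : ‖e‖ = 1) {t : ℝ} (ht0 : 0 ≤ t) (ht1 : t ≤ 1) (z : E) :
    ‖parabolicScaling e t z‖ ≤ t * ‖z‖ := by
  refine le_of_sq_le_sq ?_ (by positivity)
  rw [norm_sq_eq_inner_sq_add_norm_sub_inner_smul_sq he, parabolicScaling_sub_inner_smul he,
    inner_parabolicScaling he, norm_smul, Real.norm_of_nonneg ht0, mul_pow, mul_pow, mul_pow,
    norm_sq_eq_inner_sq_add_norm_sub_inner_smul_sq he z]
  have : t ^ 4 ≤ t ^ 2 := by nlinarith [sq_nonneg t, mul_le_mul_of_nonneg_left ht1 (sq_nonneg t)]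
  nlinarith [sq_nonneg ⟪z, e⟫]

theorem exists_ne_zero_inner_eq_zero [FiniteDimensional ℝ E] (hE : 2 ≤ finrank ℝ E) (e : E) :
    ∃ w : E, w ≠ 0 ∧ ⟪w, e⟫ = 0 := by
  have hspan : finrank ℝ (ℝ ∙ e) ≤ 1 := by simpa using finrank_span_le_card (R := ℝ) {e}
  have hperp : 0 < finrank ℝ (ℝ ∙ e)ᗮ := by
    have := (ℝ ∙ e).finrank_add_finrank_orthogonal
    omega
  obtain ⟨⟨w, hw⟩, hw0⟩ := finrank_pos_iff_exists_ne_zero.1 hperp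
  exact ⟨w, by simpa using hw0, Submodule.mem_orthogonal_singleton_iff_inner_left.1 hw⟩

def parabolicRegion (r : ℝ) (e : E) : Set E :=
  {z ∈ ball (0 : E) 1 | r * |⟪z, e⟫| ≤ ‖z - ⟪z, e⟫ • e‖ ^ 2}

def parabolicSeed (r : ℝ) (e : E) : Set E :=
  {z ∈ ball (0 : E) 1 |
    r * |⟪z, e⟫| < ‖z - ⟪z, e⟫ • e‖ ^ 2 ∧ ‖z - ⟪z, e⟫ • e‖ ∈ Ioo (1 / 2) 1}

theorem mapsTo_parabolicScaling_parabolicRegion (he : ‖e‖ = 1) (r : ℝ) {t : ℝ} (ht0 : 0 ≤ t)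
    (ht1 : t ≤ 1) : MapsTo (parabolicScaling e t) (parabolicRegion r e) (parabolicRegion r e) := by
  rintro z ⟨hz1, hzr⟩
  refine ⟨?_, ?_⟩
  · rw [mem_ball_zero_iff] at hz1 ⊢
    calc ‖parabolicScaling e t z‖ ≤ t * ‖z‖ := norm_parabolicScaling_le he ht0 ht1 z
      _ < 1 := by nlinarith [norm_nonneg z]
  · rw [parabolicScaling_sub_inner_smul he, inner_parabolicScaling he, norm_smul,
      Real.norm_of_nonneg ht0, abs_mul, abs_of_nonneg (sq_nonneg t)]
    nlinarith [sq_nonneg t]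

theorem parabolicSeed_subset_parabolicRegion (r : ℝ) (e : E) :
    parabolicSeed r e ⊆ parabolicRegion r e :=
  fun _ ⟨hz1, hzr, _⟩ => ⟨hz1, hzr.le⟩

theorem isOpen_parabolicSeed (r : ℝ) (e : E) : IsOpen (parabolicSeed r e) := by
  have hperp : Continuous fun z : E => ‖z - ⟪z, e⟫ • e‖ := by fun_prop
  refine isOpen_ball.inter (IsOpen.inter ?_ (isOpen_Ioo.preimage hperp))
  exact isOpen_lt (by fun_prop) (hperp.pow 2)

theorem parabolicSeed_nonempty [FiniteDimensional ℝ E] (hE : 2 ≤ finrank ℝ E) (r : ℝ) (e : E) :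
    (parabolicSeed r e).Nonempty := by
  obtain ⟨w, hw0, hwe⟩ := exists_ne_zero_inner_eq_zero hE e
  have hnorm : ‖(3 / 4 * ‖w‖⁻¹) • w‖ = 3 / 4 := by
    rw [norm_smul, Real.norm_of_nonneg (by positivity), mul_assoc,
      inv_mul_cancel₀ (norm_ne_zero_iff.2 hw0)]
    norm_num
  refine ⟨(3 / 4 * ‖w‖⁻¹) • w, ?_, ?_, ?_⟩ <;>
    simp only [real_inner_smul_left, hwe, mul_zero, zero_smul, sub_zero, abs_zero, hnorm,
      mem_ball_zero_iff] <;> norm_num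

theorem zero_notMem_parabolicSeed (r : ℝ) (e : E) : (0 : E) ∉ parabolicSeed r e := by
  rintro ⟨-, -, h, -⟩
  norm_num at h

theorem norm_sub_inner_smul_parabolicScaling_mem_Ioo (he : ‖e‖ = 1) {r t : ℝ} (ht : 0 < t)
    {z : E} (hz : z ∈ parabolicSeed r e) :
    ‖parabolicScaling e t z - ⟪parabolicScaling e t z, e⟫ • e‖ ∈ Ioo (t / 2) t := by
  obtain ⟨-, -, hlo, hhi⟩ := hz
  rw [parabolicScaling_sub_inner_smul he, norm_smul, Real.norm_of_nonneg ht.le]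
  constructor <;> nlinarith

theorem pairwise_disjoint_image_parabolicScaling (he : ‖e‖ = 1) (r : ℝ) :
    Pairwise (Disjoint on fun k : ℕ => parabolicScaling e ((1 / 2) ^ k) '' parabolicSeed r e) := by
  refine (pairwise_disjoint_on _).2 fun k l hkl => ?_
  rw [Set.disjoint_left]
  rintro _ ⟨z, hz, rfl⟩ ⟨w, hw, hzw⟩
  have hk := norm_sub_inner_smul_parabolicScaling_mem_Ioo he (t := (1 / 2) ^ k) (by positivity) hz
  have hl := norm_sub_inner_smul_parabolicScaling_mem_Ioo he (t := (1 / 2) ^ l) (by positivity) hw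
  rw [hzw] at hl
  have : ((1 : ℝ) / 2) ^ l ≤ (1 / 2) ^ k / 2 :=
    calc ((1 : ℝ) / 2) ^ l ≤ (1 / 2) ^ (k + 1) :=
          pow_le_pow_of_le_one (by norm_num) (by norm_num) hkl
      _ = (1 / 2) ^ k / 2 := by ring
  linarith [hk.1, hl.2]

theorem rpow_le_pow_mul_norm_parabolicScaling_rpow (he : ‖e‖ = 1) {t : ℝ} (ht0 : 0 < t)
    (ht1 : t ≤ 1) (z : E) :
    ‖z‖ ^ (-(finrank ℝ E : ℝ) - 1)
      ≤ t ^ (finrank ℝ E + 1) * ‖parabolicScaling e t z‖ ^ (-(finrank ℝ E : ℝ) - 1) := by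
  set p : ℝ := -(finrank ℝ E : ℝ) - 1
  have hp : p < 0 := by simp only [p]; linarith [(finrank ℝ E).cast_nonneg (α := ℝ)]
  rcases eq_or_ne z 0 with rfl | hz
  · -- the density vanishes at the origin, since `0 ^ p = 0` for `p ≠ 0`
    simp [Real.zero_rpow hp.ne]
  have hPz : 0 < ‖parabolicScaling e t z‖ :=
    norm_pos_iff.2 ((map_ne_zero_iff _ (parabolicScaling_injective he ht0.ne')).2 hz)
  calc ‖z‖ ^ p = t ^ (finrank ℝ E + 1) * (t * ‖z‖) ^ p := by
        rw [Real.mul_rpow ht0.le (norm_nonneg z), ← mul_assoc, ← Real.rpow_natCast,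
          ← Real.rpow_add ht0]
        simp [p]
    _ ≤ t ^ (finrank ℝ E + 1) * ‖parabolicScaling e t z‖ ^ p := by
        refine mul_le_mul_of_nonneg_left ?_ (by positivity)
        exact Real.rpow_le_rpow_of_nonpos hPz (norm_parabolicScaling_le he ht0.le ht1 z) hp.le

section Dislocation

variable [MeasurableSpace E]

noncomputable def dislocationMeasure (μ : Measure E) : Measure E :=
  μ.withDensity fun z => ENNReal.ofReal (‖z‖ ^ (-(finrank ℝ E : ℝ) - 1))

variable [BorelSpace E]

theorem dislocationMeasure_le_image_parabolicScaling [FiniteDimensional ℝ E] (μ : Measure E)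
    [μ.IsAddHaarMeasure] (he : ‖e‖ = 1) {t : ℝ} (ht0 : 0 < t) (ht1 : t ≤ 1) {s : Set E}
    (hs : MeasurableSet s) :
    dislocationMeasure μ s ≤ dislocationMeasure μ (parabolicScaling e t '' s) := by
  have hinj := parabolicScaling_injective he ht0.ne'
  rw [dislocationMeasure, withDensity_apply _ hs,
    withDensity_apply _ (LinearMap.measurableSet_image hinj hs),
    LinearMap.setLIntegral_image μ hinj hs, det_parabolicScaling he,
    ← lintegral_const_mul' _ _ ENNReal.ofReal_ne_top]
  refine lintegral_mono fun z => ?_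
  rw [abs_of_pos (by positivity), ← ENNReal.ofReal_mul (by positivity)]
  exact ENNReal.ofReal_le_ofReal (rpow_le_pow_mul_norm_parabolicScaling_rpow he ht0 ht1 z)

theorem dislocationMeasure_pos_of_isOpen (μ : Measure E) [μ.IsOpenPosMeasure] {U : Set E}
    (hU : IsOpen U) (hne : U.Nonempty) (h0 : (0 : E) ∉ U) : 0 < dislocationMeasure μ U := by
  rw [dislocationMeasure, withDensity_apply _ hU.measurableSet,
    setLIntegral_pos_iff (by fun_prop)]
  have hsupp :
      support (fun z : E => ENNReal.ofReal (‖z‖ ^ (-(finrank ℝ E : ℝ) - 1))) ∩ U = U := by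
    refine inter_eq_right.2 fun z hz => ?_
    have hz0 : z ≠ 0 := fun h => h0 (h ▸ hz)
    simpa using Real.rpow_pos_of_pos (norm_pos_iff.2 hz0) _
  rw [hsupp]
  exact hU.measure_pos μ hne

theorem dislocationMeasure_parabolicRegion [FiniteDimensional ℝ E] (μ : Measure E)
    [μ.IsAddHaarMeasure] (hE : 2 ≤ finrank ℝ E) (he : ‖e‖ = 1) (r : ℝ) :
    dislocationMeasure μ (parabolicRegion r e) = ∞ := by
  set A := parabolicSeed r e
  have hA : MeasurableSet A := (isOpen_parabolicSeed r e).measurableSet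
  have hApos : dislocationMeasure μ A ≠ 0 := (dislocationMeasure_pos_of_isOpen μ
    (isOpen_parabolicSeed r e) (parabolicSeed_nonempty hE r e) (zero_notMem_parabolicSeed r e)).ne'
  have hscale (k : ℕ) : (0 : ℝ) < (1 / 2) ^ k ∧ ((1 : ℝ) / 2) ^ k ≤ 1 :=
    ⟨by positivity, pow_le_one₀ (by norm_num) (by norm_num)⟩
  refine top_unique ?_
  calc ∞ = ∑' _k : ℕ, dislocationMeasure μ A := (ENNReal.tsum_const_eq_top_of_ne_zero hApos).symm
    _ ≤ ∑' k : ℕ, dislocationMeasure μ (parabolicScaling e ((1 / 2) ^ k) '' A) :=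
        ENNReal.tsum_le_tsum fun k =>
          dislocationMeasure_le_image_parabolicScaling μ he (hscale k).1 (hscale k).2 hA
    _ = dislocationMeasure μ (⋃ k : ℕ, parabolicScaling e ((1 / 2) ^ k) '' A) :=
        (measure_iUnion (pairwise_disjoint_image_parabolicScaling he r) fun k =>
          LinearMap.measurableSet_image (parabolicScaling_injective he (hscale k).1.ne') hA).symm
    _ ≤ dislocationMeasure μ (parabolicRegion r e) :=
        measure_mono <| iUnion_subset fun k => image_subset_iff.2 <|
          (mapsTo_parabolicScaling_parabolicRegion he r (hscale k).1.le (hscale k).2).mono_left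
            (parabolicSeed_subset_parabolicRegion r e)

end Dislocation

theorem alpha_one_kernel_infinite_general (N : ℕ) (hN : 2 ≤ N)
    (ν : Measure (EuclideanSpace ℝ (Fin N)))
    (hν : ν = volume.withDensity fun z => ENNReal.ofReal (‖z‖ ^ (-(N:ℝ) - 1)))
    (r : ℝ) (e : EuclideanSpace ℝ (Fin N)) (he : ‖e‖ = 1) :
    ν {z ∈ Metric.ball (0 : EuclideanSpace ℝ (Fin N)) 1 |
        r * |⟪z, e⟫| ≤ ‖z - ⟪z, e⟫ • e‖ ^ 2} = ⊤ := by
  have hfinrank : finrank ℝ (EuclideanSpace ℝ (Fin N)) = N := finrank_euclideanSpace_fin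
  rw [show ν = dislocationMeasure volume by rw [hν, dislocationMeasure, hfinrank]]
  exact dislocationMeasure_parabolicRegion volume (by rwa [hfinrank]) he r

/-- For `α = 1` (kernel `|z|^{-N-1}`, `N ≥ 2`), every parabolic region
`{ z ∈ B : r|z·e| ≤ |z-(z·e)e|² }` has infinite `ν`-measure: assumption (A3) fails. -/
theorem alpha_one_kernel_infinite (N : ℕ) (hN : 2 ≤ N)
    (ν : Measure (EuclideanSpace ℝ (Fin N)))
    (hν : ν = volume.withDensity fun z => ENNReal.ofReal (‖z‖ ^ (-(N:ℝ) - 1)))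
    (r : ℝ) (hr : 0 < r) (e : EuclideanSpace ℝ (Fin N)) (he : ‖e‖ = 1) :
    ν {z ∈ Metric.ball (0 : EuclideanSpace ℝ (Fin N)) 1 |
        r * |⟪z, e⟫| ≤ ‖z - ⟪z, e⟫ • e‖ ^ 2} = ⊤ :=
  alpha_one_kernel_infinite_general N hN ν hν r e he
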